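/- Let G be a digraph, s, t vertices with dist_G(s,t) < ∞, and let P be a simple directed s-to-t path with length(P) > dist_G(s,t). Let p be the smallest natural number such that at least two distinct vertices of P lie in the layer L_p = {v : dist_G(s,v) = p}, and let x and y be, respectively, the first and second vertices of P lying in L_p. Then x ≠ y, the subpaths P[x→y] and P[y→t] are paths entirely contained in the induced subgraph G_{≥p} of G on {v : dist_G(s,v) ≥ p}, and P[x→y] and P[y→t] are internally vertex-disjoint. -/

import Mathlib

variable {V : Type*}

/-- `w` is a directed walk from `u` to `v` in the digraph with arc relation `A`:
a nonempty list of vertices whose consecutive members are joined by arcs,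
starting at `u` and ending at `v`. -/
def IsDiWalk (A : V → V → Prop) (u v : V) (w : List V) : Prop :=
  w.Chain' A ∧ w.head? = some u ∧ w.getLast? = some v

/-- The length (number of arcs) of a walk represented as its list of vertices. -/
def walkLength (w : List V) : ℕ :=
  w.length - 1

/-- `w` is a simple directed path from `u` to `v`. -/
def IsDiPath (A : V → V → Prop) (u v : V) (w : List V) : Prop :=
  IsDiWalk A u v w ∧ w.Nodup

/-- Directed distance from `u` to `v`: the minimum length of a directed
`u`-to-`v` walk, or `⊤` if `v` is unreachable from `u`. -/
noncomputable def ddist (A : V → V → Prop) (u v : V) : ℕ∞ :=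
  ⨅ (w : List V) (_ : IsDiWalk A u v w), (walkLength w : ℕ∞)

/-- The internal (non-endpoint) vertices of a path represented as a list. -/
def internalVerts (w : List V) : List V :=
  w.tail.dropLast

/-- Two paths are internally vertex-disjoint if no internal vertex of either
lies on the other. -/
def InternallyDisjoint (w₁ w₂ : List V) : Prop :=
  (∀ a ∈ internalVerts w₁, a ∉ w₂) ∧ (∀ a ∈ internalVerts w₂, a ∉ w₁)

/-- All vertices of `w` lie in the induced subgraph `G_{≥p}` (with respect to
source `s`), i.e. have distance at least `p` from `s`. A path satisfying
`IsDiPath A x y w` together with `InGeq A s p w` is exactly a path of the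
induced subgraph of `G` on `{v : dist_G(s,v) ≥ p}`. -/
def InGeq (A : V → V → Prop) (s : V) (p : ℕ) (w : List V) : Prop :=
  ∀ a ∈ w, (p : ℕ∞) ≤ ddist A s a

/-!
Distances from `s` grow by at most one along an arc, so the prefix of `P` up to `x`, which starts
at distance `0` and ends at distance `p`, meets every layer `L_q` with `q < p`. By the minimality
of `p` no later vertex of `P` lies in such a layer, hence `P` stays in `G_{≥p}` from `x` on.
-/

section Walks

variable {A : V → V → Prop}

lemma IsDiWalk.ne_nil {u v : V} {w : List V} (hw : IsDiWalk A u v w) : w ≠ [] := by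
  rintro rfl
  simp [IsDiWalk] at hw

lemma isDiWalk_append_singleton_iff {s u b : V} {w : List V} (hu : w.getLast? = some u) :
    IsDiWalk A s b (w ++ [b]) ↔ IsDiWalk A s u w ∧ A u b := by
  have hw : w ≠ [] := by rintro rfl; simp at hu
  rw [IsDiWalk, IsDiWalk, List.head?_append_of_ne_nil _ hw]
  constructor
  · rintro ⟨hc, hs, -⟩
    have hc := List.isChain_append.1 hc
    exact ⟨⟨hc.1, hs, hu⟩, hc.2.2 u hu b rfl⟩
  · rintro ⟨⟨hc, hs, -⟩, hub⟩
    refine ⟨List.isChain_append.2 ⟨hc, List.isChain_singleton b, ?_⟩, hs, List.getLast?_concat⟩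
    simpa [hu] using hub

lemma walkLength_append_singleton {w : List V} (hw : w ≠ []) (b : V) :
    walkLength (w ++ [b]) = walkLength w + 1 := by
  have := List.length_pos_iff.2 hw
  simp only [walkLength, List.length_append, List.length_singleton]
  omega

lemma IsDiWalk.take {u v : V} {w : List V} (hw : IsDiWalk A u v w) {i : ℕ} (hi : i < w.length) :
    IsDiWalk A u w[i] (w.take (i + 1)) := by
  obtain ⟨hc, hh, -⟩ := hw
  exact ⟨hc.take _, by simpa [List.head?_take] using hh, by simp [List.getLast?_take, hi]⟩

lemma IsDiWalk.drop {u v : V} {w : List V} (hw : IsDiWalk A u v w) {i : ℕ} (hi : i < w.length) :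
    IsDiWalk A w[i] v (w.drop i) := by
  obtain ⟨hc, -, hl⟩ := hw
  exact ⟨hc.drop _, by simp [List.head?_drop, hi], by simp [List.getLast?_drop, hl, hi]⟩

lemma IsDiPath.take {u v : V} {w : List V} (hw : IsDiPath A u v w) {i : ℕ} (hi : i < w.length) :
    IsDiPath A u w[i] (w.take (i + 1)) :=
  ⟨hw.1.take hi, hw.2.sublist (List.take_sublist _ _)⟩

lemma IsDiPath.drop {u v : V} {w : List V} (hw : IsDiPath A u v w) {i : ℕ} (hi : i < w.length) :
    IsDiPath A w[i] v (w.drop i) :=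
  ⟨hw.1.drop hi, hw.2.sublist (List.drop_sublist _ _)⟩

lemma IsDiPath.drop_take {u v : V} {w : List V} (hw : IsDiPath A u v w) {i j : ℕ} (hij : i ≤ j)
    (hj : j < w.length) :
    IsDiPath A w[i] w[j] ((w.drop i).take (j - i + 1)) := by
  have hseg := (hw.drop (hij.trans_lt hj)).take (i := j - i) (by simp; omega)
  simpa only [List.getElem_drop, Nat.add_sub_cancel' hij] using hseg

end Walks

section Distance

variable {A : V → V → Prop}

lemma ddist_le_walkLength {u v : V} {w : List V} (hw : IsDiWalk A u v w) :
    ddist A u v ≤ walkLength w :=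
  iInf₂_le w hw

lemma ddist_self (s : V) : ddist A s s = 0 :=
  nonpos_iff_eq_zero.1 (ddist_le_walkLength (w := [s]) ⟨List.isChain_singleton s, rfl, rfl⟩)

lemma ddist_le_ddist_add_one {s u v : V} (huv : A u v) : ddist A s v ≤ ddist A s u + 1 := by
  simp only [ddist, ENat.iInf_add]
  refine le_iInf₂ fun w hw => ?_
  calc ddist A s v ≤ walkLength (w ++ [v]) :=
        ddist_le_walkLength ((isDiWalk_append_singleton_iff hw.2.2).2 ⟨hw, huv⟩)
    _ = walkLength w + 1 := by rw [walkLength_append_singleton hw.ne_nil, Nat.cast_succ]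

lemma IsDiWalk.exists_mem_ddist_eq {s v : V} {w : List V} (hw : IsDiWalk A s v w) {q : ℕ}
    (hq : (q : ℕ∞) ≤ ddist A s v) : ∃ a ∈ w, ddist A s a = q := by
  induction w using List.reverseRecOn generalizing v with
  | nil => exact absurd rfl hw.ne_nil
  | append_singleton w b ih =>
    obtain rfl : b = v := by simpa using hw.2.2
    cases hu : w.getLast? with
    | none =>
      obtain rfl := List.getLast?_eq_none_iff.1 hu
      obtain rfl : b = s := by simpa using hw.2.1
      rw [ddist_self, nonpos_iff_eq_zero, Nat.cast_eq_zero] at hq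
      exact ⟨b, by simp, by rw [ddist_self, hq, Nat.cast_zero]⟩
    | some u =>
      obtain ⟨hwu, hub⟩ := (isDiWalk_append_singleton_iff hu).1 hw
      by_cases hqu : (q : ℕ∞) ≤ ddist A s u
      · obtain ⟨a, ha, hda⟩ := ih hwu hqu
        exact ⟨a, List.mem_append_left _ ha, hda⟩
      · have hle : ddist A s b ≤ q :=
          (ddist_le_ddist_add_one hub).trans (Order.add_one_le_of_lt (not_le.1 hqu))
        exact ⟨b, by simp, le_antisymm hle hq⟩

end Distance

lemma internallyDisjoint_drop_take_drop {P : List V} (hP : P.Nodup) {i j : ℕ} (hij : i ≤ j) :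
    InternallyDisjoint ((P.drop i).take (j - i + 1)) (P.drop j) := by
  constructor
  · intro a ha haR
    rw [internalVerts, ← List.tail_dropLast] at ha
    have h1 := List.mem_of_mem_tail ha
    rw [List.dropLast_eq_take, List.take_take, List.length_take] at h1
    have h2 : a ∈ (P.drop i).take (j - i) := List.take_subset_take_left _ (by omega) h1
    rw [← List.drop_take] at h2
    exact List.disjoint_take_drop hP le_rfl (List.drop_subset _ _ h2) haR
  · intro a ha haQ
    rw [internalVerts, List.tail_drop] at ha
    rw [show j - i + 1 = j + 1 - i by omega, ← List.drop_take] at haQ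
    exact List.disjoint_take_drop hP le_rfl (List.drop_subset _ _ haQ) (List.mem_of_mem_dropLast ha)

lemma IsDiPath.le_ddist_of_mem_drop {A : V → V → Prop} {s t : V} {P : List V}
    (hP : IsDiPath A s t P) {p : ℕ}
    (hpmin : ∀ q : ℕ, q < p →
      ¬ ∃ u ∈ P, ∃ v ∈ P, u ≠ v ∧ ddist A s u = (q : ℕ∞) ∧ ddist A s v = (q : ℕ∞))
    {i : ℕ} (hi : i < P.length) (hpi : ddist A s P[i] = p) {a : V} (ha : a ∈ P.drop i) :
    (p : ℕ∞) ≤ ddist A s a := by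
  rw [List.drop_eq_getElem_cons hi, List.mem_cons] at ha
  rcases ha with rfl | ha
  · exact hpi.ge
  by_contra! hlt
  obtain ⟨q, hq⟩ := ENat.ne_top_iff_exists.1 (hlt.trans_le le_top).ne
  have hqp : q < p := by rw [← hq] at hlt; exact_mod_cast hlt
  obtain ⟨b, hb, hbq⟩ :=
    (hP.1.take hi).exists_mem_ddist_eq (q := q) (by rw [hpi]; exact_mod_cast hqp.le)
  exact hpmin q hqp ⟨b, List.take_subset _ _ hb, a, List.drop_subset _ _ ha,
    fun hba => List.disjoint_take_drop hP.2 le_rfl hb (hba ▸ ha), hbq, hq.symm⟩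

theorem stmt6_general [DecidableEq V] (A : V → V → Prop) (s t : V)
    (P : List V) (hP : IsDiPath A s t P)
    (p : ℕ)
    (hpmin : ∀ q : ℕ, q < p →
      ¬ ∃ u ∈ P, ∃ v ∈ P, u ≠ v ∧ ddist A s u = (q : ℕ∞) ∧ ddist A s v = (q : ℕ∞))
    (x : V) (hxP : x ∈ P) (hxp : ddist A s x = (p : ℕ∞))
    (y : V) (hyP : y ∈ P)
    (hxy : P.idxOf x < P.idxOf y) :
    x ≠ y ∧
      IsDiPath A x y ((P.drop (P.idxOf x)).take (P.idxOf y - P.idxOf x + 1)) ∧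
      InGeq A s p ((P.drop (P.idxOf x)).take (P.idxOf y - P.idxOf x + 1)) ∧
      IsDiPath A y t (P.drop (P.idxOf y)) ∧
      InGeq A s p (P.drop (P.idxOf y)) ∧
      InternallyDisjoint ((P.drop (P.idxOf x)).take (P.idxOf y - P.idxOf x + 1))
        (P.drop (P.idxOf y)) := by
  have hi : P.idxOf x < P.length := List.idxOf_lt_length_iff.2 hxP
  have hj : P.idxOf y < P.length := List.idxOf_lt_length_iff.2 hyP
  have hgeq : InGeq A s p (P.drop (P.idxOf x)) :=
    fun a => hP.le_ddist_of_mem_drop hpmin hi (by rwa [List.getElem_idxOf])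
  refine ⟨fun h => hxy.ne (h ▸ rfl), ?_, fun a ha => hgeq a (List.take_subset _ _ ha), ?_,
    fun a ha => hgeq a (List.drop_subset_drop_left _ hxy.le ha),
    internallyDisjoint_drop_take_drop hP.2 hxy.le⟩
  · simpa only [List.getElem_idxOf] using hP.drop_take hxy.le hj
  · simpa only [List.getElem_idxOf] using hP.drop hj

/-- for a non-shortest simple `s`-to-`t` path `P`, with `p` the
smallest index of a BFS layer containing at least two vertices of `P`, and `x`
and `y` the first and second vertices of `P` in layer `p`, we have `x ≠ y`,
the subpaths `P[x→y]` and `P[y→t]` are paths entirely contained in `G_{≥p}`,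
and they are internally vertex-disjoint. -/
theorem stmt6 [DecidableEq V] (A : V → V → Prop) (s t : V)
    (hfin : ddist A s t < ⊤) (P : List V) (hP : IsDiPath A s t P)
    (hlong : ddist A s t < (walkLength P : ℕ∞))
    (p : ℕ)
    (hp : ∃ u ∈ P, ∃ v ∈ P, u ≠ v ∧ ddist A s u = (p : ℕ∞) ∧ ddist A s v = (p : ℕ∞))
    (hpmin : ∀ q : ℕ, q < p →
      ¬ ∃ u ∈ P, ∃ v ∈ P, u ≠ v ∧ ddist A s u = (q : ℕ∞) ∧ ddist A s v = (q : ℕ∞))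
    (x : V) (hxP : x ∈ P) (hxp : ddist A s x = (p : ℕ∞))
    (hxfirst : ∀ z ∈ P.take (P.idxOf x), ddist A s z ≠ (p : ℕ∞))
    (y : V) (hyP : y ∈ P) (hyp : ddist A s y = (p : ℕ∞))
    (hxy : P.idxOf x < P.idxOf y)
    (hysecond : ∀ z ∈ P.take (P.idxOf y), z ≠ x → ddist A s z ≠ (p : ℕ∞)) :
    x ≠ y ∧
      IsDiPath A x y ((P.drop (P.idxOf x)).take (P.idxOf y - P.idxOf x + 1)) ∧
      InGeq A s p ((P.drop (P.idxOf x)).take (P.idxOf y - P.idxOf x + 1)) ∧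
      IsDiPath A y t (P.drop (P.idxOf y)) ∧
      InGeq A s p (P.drop (P.idxOf y)) ∧
      InternallyDisjoint ((P.drop (P.idxOf x)).take (P.idxOf y - P.idxOf x + 1))
        (P.drop (P.idxOf y)) :=
  stmt6_general A s t P hP p hpmin x hxP hxp y hyP hxy
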